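/- Let E be a normed additive commutative group, x : ℕ → E, f : E → ℝ, γ > 0, Δ₀ ≥ 0, C ≥ 0, and ε : ℕ → ℝ nonnegative with Σ_{k=0}^∞ ε(k) ≤ C. Suppose f(x(t+1)) ≥ f(x(t)) + γ·‖x(t+1) − x(t)‖² − ε(t) for every t, and there exists F ∈ ℝ with f(x(t)) ≤ F for all t and F − f(x(0)) ≤ Δ₀. Then for every δ > 0 and every integer T ≥ 1 with T ≥ (Δ₀ + C)/(γ·δ²), one has min_{0 ≤ k ≤ T−1} ‖x(k+1) − x(k)‖² ≤ δ². -/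
import Mathlib


/-- Initialization-quality lemma: with initial gap at most `Δ₀` and total inexactness
at most `C`, any horizon `T ≥ (Δ₀ + C)/(γ δ²)` guarantees that the smallest squared
step among the first `T` iterations is at most `δ²`. -/
theorem iteration_count_bound
    {E : Type*} [NormedAddCommGroup E]
    (x : ℕ → E) (f : E → ℝ) (γ : ℝ) (hγ : 0 < γ)
    (Δ₀ : ℝ) (hΔ₀ : 0 ≤ Δ₀) (C : ℝ) (hC : 0 ≤ C)
    (ε : ℕ → ℝ) (hε : ∀ t, 0 ≤ ε t)
    (hsum : Summable ε) (hεsum : ∑' k, ε k ≤ C)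
    (hstep : ∀ t, f (x (t + 1)) ≥ f (x t) + γ * ‖x (t + 1) - x t‖ ^ 2 - ε t)
    (F : ℝ) (hF : ∀ t, f (x t) ≤ F) (hgap : F - f (x 0) ≤ Δ₀) :
    ∀ (δ : ℝ), 0 < δ → ∀ (T : ℕ) (hT : 1 ≤ T), (Δ₀ + C) / (γ * δ ^ 2) ≤ (T : ℝ) →
      ((Finset.range T).inf' (Finset.nonempty_range_iff.mpr (by omega))
          fun k => ‖x (k + 1) - x k‖ ^ 2) ≤ δ ^ 2 := by
  intro δ hδ T hT hTbound
  by_contra hlt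
  push_neg at hlt
  -- every step squared is > δ²
  have hall : ∀ k ∈ Finset.range T, δ ^ 2 < ‖x (k + 1) - x k‖ ^ 2 := by
    intro k hk
    exact lt_of_lt_of_le hlt (Finset.inf'_le _ hk)
  -- telescoping
  have htel : ∀ n : ℕ, f (x 0) + γ * ∑ k ∈ Finset.range n, ‖x (k + 1) - x k‖ ^ 2
      - ∑ k ∈ Finset.range n, ε k ≤ f (x n) := by
    intro n
    induction n with
    | zero => simp
    | succ n ih =>
      have := hstep n
      rw [Finset.sum_range_succ, Finset.sum_range_succ]
      nlinarith [this, ih]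
  have hεpartial : ∑ k ∈ Finset.range T, ε k ≤ C :=
    le_trans (Summable.sum_le_tsum _ (fun k _ => hε k) hsum) hεsum
  have hsumlt : (T : ℝ) * δ ^ 2 < ∑ k ∈ Finset.range T, ‖x (k + 1) - x k‖ ^ 2 := by
    calc (T : ℝ) * δ ^ 2 = ∑ k ∈ Finset.range T, δ ^ 2 := by
          simp [Finset.sum_const, mul_comm]
      _ < ∑ k ∈ Finset.range T, ‖x (k + 1) - x k‖ ^ 2 := by
          apply Finset.sum_lt_sum_of_nonempty (Finset.nonempty_range_iff.mpr (by omega))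
          exact hall
  have hTd : Δ₀ + C ≤ (T : ℝ) * (γ * δ ^ 2) := by
    rw [div_le_iff₀ (by positivity)] at hTbound
    linarith
  have h1 := htel T
  have h2 := hF T
  nlinarith [hsumlt, hεpartial, h1, h2, hgap, hTd]
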